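/- Let d, L be positive integers and let V be a Hermitian operator on H = ⊗_{l=1}^{L} ℂ^d. Suppose the linear map 𝒱̄(ρ) = −i(Vρ − ρV) on operators on H admits a decomposition 𝒱̄ = Σ_{k=1}^{K} α_k · Φ_{1,k} ⊗ Φ_{2,k} ⊗ ⋯ ⊗ Φ_{L,k}, where each Φ_{l,k} is a generalised quantum operation on d×d matrices and α_k ∈ ℂ. Then Σ_{k=1}^{K} |α_k| ≥ max_{1≤l≤L} ‖R_l(X̄)‖₁, where X̄ is the Choi operator of 𝒱̄, R_l is the l-th realignment, and ‖·‖₁ is the trace norm. -/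

import Mathlib

open Matrix
open scoped Kronecker ComplexOrder

/-- Partial trace over the second (ancilla) tensor factor. -/
noncomputable def ptraceE {ι κ : Type*} [Fintype κ] (X : Matrix (ι × κ) (ι × κ) ℂ) :
    Matrix ι ι ℂ :=
  Matrix.of fun i j => ∑ k, X (i, k) (j, k)

/-- A generalised quantum operation `Φ(ρ) = Tr_E[U (ρ ⊗ |e⟩⟨e|) V†]`. -/
def IsGQO {ι : Type*} [Fintype ι] [DecidableEq ι]
    (Φ : Matrix ι ι ℂ → Matrix ι ι ℂ) : Prop :=
  ∃ (dE : ℕ) (e : Fin dE → ℂ) (U V : Matrix (ι × Fin dE) (ι × Fin dE) ℂ),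
    star e ⬝ᵥ e = 1 ∧
    U ∈ Matrix.unitaryGroup (ι × Fin dE) ℂ ∧
    V ∈ Matrix.unitaryGroup (ι × Fin dE) ℂ ∧
    ∀ ρ, Φ ρ = ptraceE (U * (ρ ⊗ₖ Matrix.vecMulVec e (star e)) * Vᴴ)

/-- The trace norm `‖M‖₁ = Tr √(M Mᴴ)`. -/
noncomputable def traceNorm {m n : Type*} [Fintype m] [Fintype n] [DecidableEq m]
    (M : Matrix m n ℂ) : ℝ :=
  (((Matrix.posSemidef_self_mul_conjTranspose M).1.eigenvectorUnitary : Matrix m m ℂ) *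
      Matrix.diagonal (fun i => ((Real.sqrt ((Matrix.posSemidef_self_mul_conjTranspose M).1.eigenvalues i) : ℝ) : ℂ)) *
      (star (Matrix.posSemidef_self_mul_conjTranspose M).1.eigenvectorUnitary : Matrix m m ℂ)).trace.re

/-- The tensor product `Φ_1 ⊗ ⋯ ⊗ Φ_L` of maps on the subsystems,
as a map on operators on the whole system, obtained by linear extension
from its action on matrix units. -/
noncomputable def tensorMap {ι : Type*} [Fintype ι] [DecidableEq ι] {L : ℕ}
    (Φ : Fin L → (Matrix ι ι ℂ → Matrix ι ι ℂ)) :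
    Matrix (Fin L → ι) (Fin L → ι) ℂ → Matrix (Fin L → ι) (Fin L → ι) ℂ := fun A =>
  Matrix.of fun a b => ∑ x : Fin L → ι, ∑ y : Fin L → ι,
    A x y * ∏ l, Φ l (Matrix.single (x l) (y l) 1) (a l) (b l)

/-- The Choi operator of a map `Λ` on operators on `⊗_l ℂ^d`:
`Λ` acting on the `L` primary factors and the identity on the `L` copies,
applied to the tensor product of the maximally entangled states `φ_{l,l'}`. -/
noncomputable def choiOp {ι : Type*} [Fintype ι] [DecidableEq ι] {L : ℕ}
    (Λ : Matrix (Fin L → ι) (Fin L → ι) ℂ → Matrix (Fin L → ι) (Fin L → ι) ℂ) :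
    Matrix (Fin L → ι × ι) (Fin L → ι × ι) ℂ :=
  Matrix.of fun p q =>
    (((Fintype.card ι : ℂ)) ^ L)⁻¹ *
      Λ (Matrix.single (fun l => (p l).2) (fun l => (q l).2) 1)
        (fun l => (p l).1) (fun l => (q l).1)

/-- The `l`-th realignment of an operator on `⊗_{m} (ℂ^d ⊗ ℂ^d)`. -/
def realign {ι : Type*} {L : ℕ} (X : Matrix (Fin L → ι × ι) (Fin L → ι × ι) ℂ) (l : Fin L) :
    Matrix ((ι × ι) × (ι × ι)) ({ m : Fin L // m ≠ l } → (ι × ι) × (ι × ι)) ℂ :=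
  Matrix.of fun r g =>
    X (fun m => if h : m = l then r.1 else (g ⟨m, h⟩).1)
      (fun m => if h : m = l then r.2 else (g ⟨m, h⟩).2)

/-! By linearity, the `l`-th realignment of the Choi operator of
`𝒱̄ = ∑ₖ αₖ Φ_{1,k} ⊗ ⋯ ⊗ Φ_{L,k}` is `∑ₖ αₖ vₖ wₖᵀ`, where `vₖ` is the realigned single-site
Choi operator of `Φ_{l,k}` and `wₖ` is the tensor product of those of the other sites.
A generalised quantum operation satisfies `Φ(|j⟩⟨j'|)_{ab} = ∑ₖ u_j(a,k) conj (v_{j'}(b,k))` with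
`u_j = U (|j⟩ ⊗ e)` and `v_j = V (|j⟩ ⊗ e)` of norm `1`, so by Cauchy–Schwarz its realigned Choi
vector has Euclidean norm at most `1`; hence so do all `vₖ` and `wₖ`. Finally `‖M‖₁ = Re Tr (M C)`
for a contraction `C` (the adjoint of the polar factor of `M`), and `|Tr (v wᵀ C)| ≤ ‖v‖ ‖w‖`,
which gives `‖∑ₖ αₖ vₖ wₖᵀ‖₁ ≤ ∑ₖ |αₖ|`. -/

lemma norm_dotProduct_le {ι : Type*} [Fintype ι] (x y : ι → ℂ) :
    ‖x ⬝ᵥ y‖ ≤ ‖WithLp.toLp 2 x‖ * ‖WithLp.toLp 2 y‖ := by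
  have h := norm_inner_le_norm (𝕜 := ℂ) (WithLp.toLp 2 (star y)) (WithLp.toLp 2 x)
  rw [EuclideanSpace.inner_toLp_toLp, star_star, mul_comm] at h
  simpa [EuclideanSpace.norm_eq] using h

lemma norm_toLp_star {ι : Type*} [Fintype ι] (x : ι → ℂ) :
    ‖WithLp.toLp 2 (star x)‖ = ‖WithLp.toLp 2 x‖ := by
  simp [EuclideanSpace.norm_eq]

lemma norm_toLp_mul_apply {m n : Type*} [Fintype m] [Fintype n] (x : m → ℂ) (y : n → ℂ) :
    ‖WithLp.toLp 2 (fun p : m × n => x p.1 * y p.2)‖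
      = ‖WithLp.toLp 2 x‖ * ‖WithLp.toLp 2 y‖ := by
  simp only [EuclideanSpace.norm_eq, norm_mul, mul_pow, Fintype.sum_prod_type]
  rw [← Real.sqrt_mul (by positivity), Finset.sum_mul_sum]

lemma sum_norm_toLp_curry_sq {α β : Type*} [Fintype α] [Fintype β] (x : α × β → ℂ) :
    ∑ a, ‖WithLp.toLp 2 (fun b => x (a, b))‖ ^ 2 = ‖WithLp.toLp 2 x‖ ^ 2 := by
  simp only [EuclideanSpace.norm_sq_eq, Fintype.sum_prod_type]

lemma norm_toLp_prod_apply {κ β : Type*} [Fintype κ] [DecidableEq κ] [Fintype β]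
    (f : κ → β → ℂ) :
    ‖WithLp.toLp 2 (fun g : κ → β => ∏ i, f i (g i))‖ = ∏ i, ‖WithLp.toLp 2 (f i)‖ := by
  simp only [EuclideanSpace.norm_eq, norm_prod, ← Finset.prod_pow]
  rw [← Real.sqrt_prod _ fun i _ => by positivity, Fintype.prod_sum]

section L2OpNorm

open scoped Matrix.Norms.L2Operator

namespace Matrix.IsHermitian

variable {n : Type*} [Fintype n] [DecidableEq n] {A : Matrix n n ℂ} (hA : A.IsHermitian)
include hA

lemma cfc_id_eq : hA.cfc id = A := hA.spectral_theorem.symm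

lemma cfc_mul_cfc (f g : ℝ → ℝ) : hA.cfc f * hA.cfc g = hA.cfc (f * g) := by
  simp only [IsHermitian.cfc, ← map_mul, diagonal_mul_diagonal]
  congr 2
  ext i
  simp

lemma conjTranspose_cfc (f : ℝ → ℝ) : (hA.cfc f)ᴴ = hA.cfc f := by
  rw [← star_eq_conjTranspose, IsHermitian.cfc, ← map_star, star_eq_conjTranspose,
    diagonal_conjTranspose]
  congr 2
  ext i
  simp

lemma norm_cfc_le_one {f : ℝ → ℝ} (hf : ∀ x, |f x| ≤ 1) : ‖hA.cfc f‖ ≤ 1 := by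
  simp only [IsHermitian.cfc, Unitary.conjStarAlgAut_apply, ← Unitary.coe_star,
    CStarRing.norm_mul_coe_unitary, CStarRing.norm_coe_unitary_mul, l2_opNorm_diagonal]
  refine (pi_norm_le_iff_of_nonneg zero_le_one).2 fun i => ?_
  simpa using hf (hA.eigenvalues i)

end Matrix.IsHermitian

lemma norm_le_one_of_norm_conjTranspose_mul_self_le_one {m n : Type*} [Fintype m] [Fintype n]
    [DecidableEq n] {C : Matrix m n ℂ} (h : ‖Cᴴ * C‖ ≤ 1) : ‖C‖ ≤ 1 := by
  rw [l2_opNorm_conjTranspose_mul_self] at h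
  nlinarith [norm_nonneg C]

lemma norm_mulVec_le_of_mem_unitaryGroup {n : Type*} [Fintype n] [DecidableEq n]
    {U : Matrix n n ℂ} (hU : U ∈ unitaryGroup n ℂ) (x : n → ℂ) :
    ‖WithLp.toLp 2 (U *ᵥ x)‖ ≤ ‖WithLp.toLp 2 x‖ := by
  have hU1 : ‖U‖ ≤ 1 := by
    refine norm_le_one_of_norm_conjTranspose_mul_self_le_one ?_
    rw [← star_eq_conjTranspose, mem_unitaryGroup_iff'.1 hU, ← diagonal_one, l2_opNorm_diagonal]
    exact (pi_norm_const_le (1 : ℂ)).trans norm_one.le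
  calc ‖WithLp.toLp 2 (U *ᵥ x)‖ ≤ ‖U‖ * ‖WithLp.toLp 2 x‖ := l2_opNorm_mulVec U _
    _ ≤ ‖WithLp.toLp 2 x‖ := mul_le_of_le_one_left (norm_nonneg _) hU1

lemma traceNorm_eq_re_trace_cfc_sqrt {m n : Type*} [Fintype m] [Fintype n] [DecidableEq m]
    (M : Matrix m n ℂ) :
    traceNorm M = ((posSemidef_self_mul_conjTranspose M).1.cfc Real.sqrt).trace.re := rfl

lemma exists_norm_le_one_traceNorm_eq {m n : Type*} [Fintype m] [Fintype n] [DecidableEq m]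
    (M : Matrix m n ℂ) :
    ∃ C : Matrix n m ℂ, ‖C‖ ≤ 1 ∧ traceNorm M = (M * C).trace.re := by
  set hP := (posSemidef_self_mul_conjTranspose M).1
  -- `C = Mᴴ (M Mᴴ)^{-1/2}` (with `0⁻¹ = 0` on the kernel): the adjoint of the polar factor of `M`
  set g : ℝ → ℝ := fun x => (√x)⁻¹
  have hmul (f : ℝ → ℝ) : M * Mᴴ * hP.cfc f = hP.cfc (id * f) := by
    rw [← hP.cfc_mul_cfc, hP.cfc_id_eq]
  refine ⟨Mᴴ * hP.cfc g, ?_, ?_⟩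
  · refine norm_le_one_of_norm_conjTranspose_mul_self_le_one ?_
    rw [conjTranspose_mul, hP.conjTranspose_cfc, conjTranspose_conjTranspose, Matrix.mul_assoc,
      ← Matrix.mul_assoc M, hmul, hP.cfc_mul_cfc]
    refine hP.norm_cfc_le_one fun x => ?_
    simp only [g, Pi.mul_apply, id, ← mul_assoc, ← div_eq_inv_mul, Real.div_sqrt]
    rw [abs_of_nonneg (by positivity)]
    exact mul_inv_le_one
  · rw [traceNorm_eq_re_trace_cfc_sqrt, ← Matrix.mul_assoc, hmul]
    congr
    funext x
    simp [g, ← div_eq_mul_inv, Real.div_sqrt]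

lemma norm_trace_vecMulVec_mul_le {m n : Type*} [Fintype m] [Fintype n] [DecidableEq m]
    (v : m → ℂ) (w : n → ℂ) (C : Matrix n m ℂ) :
    ‖(vecMulVec v w * C).trace‖ ≤ ‖C‖ * (‖WithLp.toLp 2 v‖ * ‖WithLp.toLp 2 w‖) := by
  rw [vecMulVec_mul, trace_vecMulVec, dotProduct_comm, ← dotProduct_mulVec]
  calc ‖w ⬝ᵥ (C *ᵥ v)‖ ≤ ‖WithLp.toLp 2 w‖ * ‖WithLp.toLp 2 (C *ᵥ v)‖ := norm_dotProduct_le _ _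
    _ ≤ ‖WithLp.toLp 2 w‖ * (‖C‖ * ‖WithLp.toLp 2 v‖) := by
      gcongr
      exact l2_opNorm_mulVec C (WithLp.toLp 2 v)
    _ = _ := by ring

lemma traceNorm_sum_smul_vecMulVec_le {κ m n : Type*} [Fintype κ] [Fintype m] [Fintype n]
    [DecidableEq m] (α : κ → ℂ) (v : κ → m → ℂ) (w : κ → n → ℂ) :
    traceNorm (∑ k, α k • vecMulVec (v k) (w k))
      ≤ ∑ k, ‖α k‖ * (‖WithLp.toLp 2 (v k)‖ * ‖WithLp.toLp 2 (w k)‖) := by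
  obtain ⟨C, hC, hM⟩ := exists_norm_le_one_traceNorm_eq (∑ k, α k • vecMulVec (v k) (w k))
  rw [hM, Matrix.sum_mul, trace_sum]
  refine (Complex.re_le_norm _).trans <| (norm_sum_le _ _).trans <| Finset.sum_le_sum fun k _ => ?_
  rw [smul_mul, trace_smul, norm_smul]
  gcongr
  exact (norm_trace_vecMulVec_mul_le _ _ C).trans (le_of_le_of_eq (by gcongr) (one_mul _))

end L2OpNorm

lemma kroneckerMap_vecMulVec {l m n o : Type*} (a : l → ℂ) (b : m → ℂ) (c : n → ℂ) (d : o → ℂ) :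
    vecMulVec a b ⊗ₖ vecMulVec c d
      = vecMulVec (fun p : l × n => a p.1 * c p.2) (fun q : m × o => b q.1 * d q.2) := by
  ext p q
  simp only [kroneckerMap_apply, vecMulVec_apply]
  ring

lemma ptraceE_vecMulVec {ι κ : Type*} [Fintype κ] (x y : ι × κ → ℂ) (a b : ι) :
    ptraceE (vecMulVec x y) a b = ∑ k, x (a, k) * y (b, k) := rfl

lemma IsGQO.exists_apply_single_eq {ι : Type*} [Fintype ι] [DecidableEq ι]
    {Φ : Matrix ι ι ℂ → Matrix ι ι ℂ} (hΦ : IsGQO Φ) :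
    ∃ (dE : ℕ) (u v : ι → ι × Fin dE → ℂ),
      (∀ j, ‖WithLp.toLp 2 (u j)‖ ≤ 1) ∧ (∀ j, ‖WithLp.toLp 2 (v j)‖ ≤ 1) ∧
      ∀ j j' a b, Φ (single j j' 1) a b = ∑ k, u j (a, k) * star (v j' (b, k)) := by
  obtain ⟨dE, e, U, V, he, hU, hV, hΦ⟩ := hΦ
  set x : ι → ι × Fin dE → ℂ := fun j p => (Pi.single j 1 : ι → ℂ) p.1 * e p.2
  have hx (j : ι) : ‖WithLp.toLp 2 (x j)‖ = 1 := by
    have he' : ‖WithLp.toLp 2 e‖ = 1 := by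
      have h := inner_self_eq_norm_sq (𝕜 := ℂ) (WithLp.toLp 2 e)
      rw [EuclideanSpace.inner_toLp_toLp, dotProduct_comm, he] at h
      refine (pow_eq_one_iff_of_nonneg (norm_nonneg _) two_ne_zero).1 ?_
      simpa using h.symm
    rw [norm_toLp_mul_apply, he', mul_one]
    simp
  refine ⟨dE, fun j => U *ᵥ x j, fun j => V *ᵥ x j,
    fun j => (norm_mulVec_le_of_mem_unitaryGroup hU _).trans (hx j).le,
    fun j => (norm_mulVec_le_of_mem_unitaryGroup hV _).trans (hx j).le, fun j j' a b => ?_⟩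
  have hstar : (fun q : ι × Fin dE => (Pi.single j' 1 : ι → ℂ) q.1 * star e q.2) = star (x j') := by
    ext q
    simp only [x, Pi.star_apply, Pi.single_apply, star_mul', apply_ite star, star_one, star_zero]
  rw [hΦ, single_eq_single_vecMulVec_single, kroneckerMap_vecMulVec, hstar, mul_vecMulVec,
    vecMulVec_mul, ← star_mulVec, ptraceE_vecMulVec]
  rfl

/-- The Choi operator of a single-site map, realigned into a vector indexed as the rows of
`realign`. -/
noncomputable def choiVec {ι : Type*} [Fintype ι] [DecidableEq ι]
    (Φ : Matrix ι ι ℂ → Matrix ι ι ℂ) : (ι × ι) × (ι × ι) → ℂ :=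
  fun r => (Fintype.card ι : ℂ)⁻¹ * Φ (single r.1.2 r.2.2 1) r.1.1 r.2.1

lemma IsGQO.norm_choiVec_le_one {ι : Type*} [Fintype ι] [DecidableEq ι]
    {Φ : Matrix ι ι ℂ → Matrix ι ι ℂ} (hΦ : IsGQO Φ) :
    ‖WithLp.toLp 2 (choiVec Φ)‖ ≤ 1 := by
  obtain ⟨dE, u, v, hu, hv, hΦ⟩ := hΦ.exists_apply_single_eq
  set N : ℝ := (Fintype.card ι : ℝ)
  set p : ι × ι → ℝ := fun r => ‖WithLp.toLp 2 (fun k => u r.2 (r.1, k))‖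
  set q : ι × ι → ℝ := fun r => ‖WithLp.toLp 2 (fun k => v r.2 (r.1, k))‖
  have hentry (r : (ι × ι) × (ι × ι)) :
      ‖Φ (single r.1.2 r.2.2 1) r.1.1 r.2.1‖ ≤ p r.1 * q r.2 := by
    simp only [hΦ, p, q, ← norm_toLp_star (fun k => v r.2.2 (r.2.1, k))]
    exact norm_dotProduct_le _ _
  have hsum {w : ι → ι × Fin dE → ℂ} (hw : ∀ j, ‖WithLp.toLp 2 (w j)‖ ≤ 1) :
      ∑ r : ι × ι, ‖WithLp.toLp 2 (fun k => w r.2 (r.1, k))‖ ^ 2 ≤ N := by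
    rw [Fintype.sum_prod_type, Finset.sum_comm]
    simp only [sum_norm_toLp_curry_sq]
    calc ∑ j, ‖WithLp.toLp 2 (w j)‖ ^ 2 ≤ ∑ _j : ι, (1 : ℝ) :=
          Finset.sum_le_sum fun j _ => pow_le_one₀ (norm_nonneg _) (hw j)
      _ = N := by simp [N]
  rw [← sq_le_one_iff₀ (norm_nonneg _), EuclideanSpace.norm_sq_eq]
  calc ∑ r, ‖choiVec Φ r‖ ^ 2
      = (N ^ 2)⁻¹ * ∑ r : (ι × ι) × (ι × ι), ‖Φ (single r.1.2 r.2.2 1) r.1.1 r.2.1‖ ^ 2 := by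
        simp [choiVec, Finset.mul_sum, mul_pow, N]
    _ ≤ (N ^ 2)⁻¹ * ((∑ r, p r ^ 2) * ∑ r, q r ^ 2) := by
        rw [Finset.sum_mul_sum, ← Fintype.sum_prod_type']
        gcongr with r
        simpa [mul_pow] using pow_le_pow_left₀ (norm_nonneg _) (hentry r) 2
    _ ≤ (N ^ 2)⁻¹ * (N * N) := by
        gcongr
        exacts [hsum hu, hsum hv]
    _ ≤ 1 := by
        rw [← sq]
        exact inv_mul_le_one

section Tensor

variable {ι : Type*} [Fintype ι] [DecidableEq ι] {L : ℕ}

lemma tensorMap_single_apply (Φ : Fin L → Matrix ι ι ℂ → Matrix ι ι ℂ) (x y a b : Fin L → ι) :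
    tensorMap Φ (single x y 1) a b = ∏ m, Φ m (single (x m) (y m) 1) (a m) (b m) := by
  simp only [tensorMap, of_apply, single, ite_and, ite_mul, one_mul, zero_mul,
    Finset.sum_ite_irrel, Finset.sum_const_zero, Finset.sum_ite_eq, Finset.mem_univ, if_true]

lemma choiOp_tensorMap_apply (Φ : Fin L → Matrix ι ι ℂ → Matrix ι ι ℂ) (p q : Fin L → ι × ι) :
    choiOp (tensorMap Φ) p q = ∏ m, choiVec (Φ m) (p m, q m) := by
  simp only [choiOp, of_apply, tensorMap_single_apply, choiVec, Finset.prod_mul_distrib,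
    Finset.prod_const, Finset.card_univ, Fintype.card_fin, inv_pow]

lemma choiOp_sum_smul {K : Type*} [Fintype K] (α : K → ℂ)
    (Λ : K → Matrix (Fin L → ι) (Fin L → ι) ℂ → Matrix (Fin L → ι) (Fin L → ι) ℂ) :
    choiOp (fun ρ => ∑ k, α k • Λ k ρ) = ∑ k, α k • choiOp (Λ k) := by
  ext p q
  simp [choiOp, Matrix.sum_apply, Finset.mul_sum, mul_left_comm]

end Tensor

section Realign

variable {ι : Type*} {L : ℕ}

lemma realign_sum_smul {K : Type*} [Fintype K] (α : K → ℂ)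
    (X : K → Matrix (Fin L → ι × ι) (Fin L → ι × ι) ℂ) (l : Fin L) :
    realign (∑ k, α k • X k) l = ∑ k, α k • realign (X k) l := by
  ext r g
  simp [realign, Matrix.sum_apply]

lemma realign_eq_vecMulVec_of_apply_eq_prod (X : Matrix (Fin L → ι × ι) (Fin L → ι × ι) ℂ)
    (f : Fin L → (ι × ι) × (ι × ι) → ℂ) (hX : ∀ p q, X p q = ∏ m, f m (p m, q m)) (l : Fin L) :
    realign X l = vecMulVec (f l) (fun g => ∏ m : {m // m ≠ l}, f m (g m)) := by
  ext r g
  rw [realign, of_apply, hX, Fintype.prod_eq_mul_prod_subtype_ne _ l, vecMulVec_apply]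
  refine congrArg₂ _ (by simp) (Finset.prod_congr rfl fun m _ => ?_)
  rw [dif_neg m.2, dif_neg m.2]

end Realign

lemma realign_choiOp_tensorMap {ι : Type*} [Fintype ι] [DecidableEq ι] {L : ℕ}
    (Φ : Fin L → Matrix ι ι ℂ → Matrix ι ι ℂ) (l : Fin L) :
    realign (choiOp (tensorMap Φ)) l
      = vecMulVec (choiVec (Φ l)) (fun g => ∏ m : {m // m ≠ l}, choiVec (Φ m) (g m)) :=
  realign_eq_vecMulVec_of_apply_eq_prod _ _ (choiOp_tensorMap_apply Φ) l

theorem stmt1_general (d L : ℕ)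
    (V : Matrix (Fin L → Fin d) (Fin L → Fin d) ℂ)
    (K : ℕ) (α : Fin K → ℂ)
    (Φ : Fin L → Fin K → (Matrix (Fin d) (Fin d) ℂ → Matrix (Fin d) (Fin d) ℂ))
    (hΦ : ∀ l k, IsGQO (Φ l k))
    (hdec : ∀ ρ, (-Complex.I) • (V * ρ - ρ * V) = ∑ k, α k • tensorMap (fun l => Φ l k) ρ) :
    ∀ l : Fin L,
      traceNorm (realign (choiOp (fun ρ => (-Complex.I) • (V * ρ - ρ * V))) l)
        ≤ ∑ k, ‖α k‖ := by
  intro l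
  rw [funext hdec, choiOp_sum_smul, realign_sum_smul]
  simp only [realign_choiOp_tensorMap]
  refine (traceNorm_sum_smul_vecMulVec_le _ _ _).trans (Finset.sum_le_sum fun k _ => ?_)
  refine mul_le_of_le_one_right (norm_nonneg _) (mul_le_one₀ (hΦ l k).norm_choiVec_le_one
    (norm_nonneg _) ?_)
  rw [norm_toLp_prod_apply]
  exact Finset.prod_le_one (fun _ _ => norm_nonneg _) fun m _ => (hΦ m k).norm_choiVec_le_one

theorem stmt1 (d L : ℕ) (hd : 0 < d) (hL : 0 < L)
    (V : Matrix (Fin L → Fin d) (Fin L → Fin d) ℂ) (hV : V.IsHermitian)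
    (K : ℕ) (α : Fin K → ℂ)
    (Φ : Fin L → Fin K → (Matrix (Fin d) (Fin d) ℂ → Matrix (Fin d) (Fin d) ℂ))
    (hΦ : ∀ l k, IsGQO (Φ l k))
    (hdec : ∀ ρ, (-Complex.I) • (V * ρ - ρ * V) = ∑ k, α k • tensorMap (fun l => Φ l k) ρ) :
    ∀ l : Fin L,
      traceNorm (realign (choiOp (fun ρ => (-Complex.I) • (V * ρ - ρ * V))) l)
        ≤ ∑ k, ‖α k‖ :=
  stmt1_general d L V K α Φ hΦ hdec
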